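/- Assume condition (PCLI1). Then for every initial distribution p on ℝ with ∫ w dp < ∞, the function z ↦ G(p,z) is discontinuous at a point z ∈ ℝ if and only if μ_p^z{z} > 0, i.e., if and only if under the z-policy started from X₀ ∼ p there exists a time t ≥ 0 at which the chain is at z with positive probability. -/

import Mathlib

open MeasureTheory ProbabilityTheory Filter Topology Set

noncomputable section

/-- A restless bandit project: the model data (discount factor `β`, passive/active
Markov transition kernels `κ false`/`κ true`, reward `r` and resource consumption `c`),
Assumption 1 (the weighted sup-norm conditions for weight `w` and constants `M`, `γ`),
together with the threshold-policy performance metrics `F`, `G` (for `z`-policies,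
active iff `x > z`), `Fm`, `Gm` (for `z⁻`-policies, active iff `x ≥ z`), and the
optimal value function `V lam` of the `lam`-price problem, each of which is the
(unique) `w`-bounded measurable solution of its fixed-point equation. -/
structure Bandit where
  β : ℝ
  κ : Bool → Kernel ℝ ℝ
  r : ℝ → Bool → ℝ
  c : ℝ → Bool → ℝ
  w : ℝ → ℝ
  M : ℝ
  γ : ℝ
  F : ℝ → EReal → ℝ
  G : ℝ → EReal → ℝ
  Fm : ℝ → EReal → ℝ
  Gm : ℝ → EReal → ℝ
  V : ℝ → ℝ → ℝ
  hβ0 : 0 ≤ β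
  hβ1 : β < 1
  hκ : ∀ a, IsMarkovKernel (κ a)
  hr_cont : ∀ a, Continuous fun x => r x a
  hc_cont : ∀ a, Continuous fun x => c x a
  hc0 : ∀ x, 0 ≤ c x false
  hc01 : ∀ x, c x false < c x true
  hw_meas : Measurable w
  hw_one : ∀ x, 1 ≤ w x
  hM : 0 < M
  hβγ : β ≤ γ
  hγ1 : γ < 1
  hr_bd : ∀ x a, |r x a| ≤ M * w x
  hc_bd : ∀ x a, c x a ≤ M * w x
  hw_int : ∀ a x, Integrable w (κ a x)
  hw_drift : ∀ a x, β * ∫ y, w y ∂(κ a x) ≤ γ * w x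
  hF_meas : ∀ z, Measurable fun x => F x z
  hG_meas : ∀ z, Measurable fun x => G x z
  hFm_meas : ∀ z, Measurable fun x => Fm x z
  hGm_meas : ∀ z, Measurable fun x => Gm x z
  hV_meas : ∀ lam, Measurable (V lam)
  hF_bdd : ∀ z, ∃ C, ∀ x, |F x z| ≤ C * w x
  hG_bdd : ∀ z, ∃ C, ∀ x, |G x z| ≤ C * w x
  hFm_bdd : ∀ z, ∃ C, ∀ x, |Fm x z| ≤ C * w x
  hGm_bdd : ∀ z, ∃ C, ∀ x, |Gm x z| ≤ C * w x
  hV_bdd : ∀ lam, ∃ C, ∀ x, |V lam x| ≤ C * w x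
  hF_eq : ∀ x z, F x z =
    r x (decide (z < (x : EReal))) +
      β * ∫ y, F y z ∂(κ (decide (z < (x : EReal))) x)
  hG_eq : ∀ x z, G x z =
    c x (decide (z < (x : EReal))) +
      β * ∫ y, G y z ∂(κ (decide (z < (x : EReal))) x)
  hFm_eq : ∀ x z, Fm x z =
    r x (decide (z ≤ (x : EReal))) +
      β * ∫ y, Fm y z ∂(κ (decide (z ≤ (x : EReal))) x)
  hGm_eq : ∀ x z, Gm x z =
    c x (decide (z ≤ (x : EReal))) +
      β * ∫ y, Gm y z ∂(κ (decide (z ≤ (x : EReal))) x)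
  hV_eq : ∀ lam x, V lam x =
    max (r x false - lam * c x false + β * ∫ y, V lam y ∂(κ false x))
        (r x true - lam * c x true + β * ∫ y, V lam y ∂(κ true x))

/-- `ν` is the Lebesgue–Stieltjes measure of the (bounded nonincreasing
right-continuous) function `h`: `ν(z₁,z₂] = h z₁ - h z₂`. -/
def IsLSMeasureOfAnti (h : ℝ → ℝ) (ν : Measure ℝ) : Prop :=
  ∀ z₁ z₂ : ℝ, z₁ ≤ z₂ → ν (Set.Ioc z₁ z₂) = ENNReal.ofReal (h z₁ - h z₂)

/-- `ν` is the Lebesgue–Stieltjes measure of the (bounded nondecreasing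
right-continuous) function `h`: `ν(z₁,z₂] = h z₂ - h z₁`. -/
def IsLSMeasureOfMono (h : ℝ → ℝ) (ν : Measure ℝ) : Prop :=
  ∀ z₁ z₂ : ℝ, z₁ ≤ z₂ → ν (Set.Ioc z₁ z₂) = ENNReal.ofReal (h z₂ - h z₁)

/-- The real interval `(z₁, z₂] ⊆ ℝ` with extended-real endpoints. -/
def iocR (z₁ z₂ : EReal) : Set ℝ := {y : ℝ | z₁ < (y : EReal) ∧ (y : EReal) ≤ z₂}

/-- `t`-step distribution of the Markov chain with kernel `κ` and initial law `p`. -/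
def kerIter (κ : Kernel ℝ ℝ) : ℕ → Measure ℝ → Measure ℝ
  | 0, p => p
  | (t + 1), p => (kerIter κ t p).bind fun x => κ x

namespace Bandit

variable (P : Bandit)

/-- Marginal reward metric `f(x,z)` of the `z`-policy. -/
def f (x : ℝ) (z : EReal) : ℝ :=
  (P.r x true - P.r x false) +
    P.β * ((∫ y, P.F y z ∂(P.κ true x)) - ∫ y, P.F y z ∂(P.κ false x))

/-- Marginal resource metric `g(x,z)` of the `z`-policy. -/
def g (x : ℝ) (z : EReal) : ℝ :=
  (P.c x true - P.c x false) +
    P.β * ((∫ y, P.G y z ∂(P.κ true x)) - ∫ y, P.G y z ∂(P.κ false x))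

/-- Marginal reward metric `f(x,z⁻)` of the `z⁻`-policy. -/
def fm (x : ℝ) (z : EReal) : ℝ :=
  (P.r x true - P.r x false) +
    P.β * ((∫ y, P.Fm y z ∂(P.κ true x)) - ∫ y, P.Fm y z ∂(P.κ false x))

/-- Marginal resource metric `g(x,z⁻)` of the `z⁻`-policy. -/
def gm (x : ℝ) (z : EReal) : ℝ :=
  (P.c x true - P.c x false) +
    P.β * ((∫ y, P.Gm y z ∂(P.κ true x)) - ∫ y, P.Gm y z ∂(P.κ false x))

/-- Marginal productivity metric `m(x,z) = f(x,z)/g(x,z)`. -/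
def m (x : ℝ) (z : EReal) : ℝ := P.f x z / P.g x z

/-- Marginal productivity metric `m(x,z⁻) = f(x,z⁻)/g(x,z⁻)`. -/
def mm (x : ℝ) (z : EReal) : ℝ := P.fm x z / P.gm x z

/-- The marginal productivity (MP) index `m*(x) = m(x,x)`. -/
def mStar (x : ℝ) : ℝ := P.m x (x : EReal)

/-- The active action is `P_lam`-optimal at `x`. -/
def ActOpt (lam x : ℝ) : Prop :=
  P.r x false - lam * P.c x false + P.β * ∫ y, P.V lam y ∂(P.κ false x) ≤
    P.r x true - lam * P.c x true + P.β * ∫ y, P.V lam y ∂(P.κ true x)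

/-- The passive action is `P_lam`-optimal at `x`. -/
def PassOpt (lam x : ℝ) : Prop :=
  P.r x true - lam * P.c x true + P.β * ∫ y, P.V lam y ∂(P.κ true x) ≤
    P.r x false - lam * P.c x false + P.β * ∫ y, P.V lam y ∂(P.κ false x)

/-- The project is indexable with index `ν`. -/
def Indexable (ν : ℝ → ℝ) : Prop :=
  ∀ lam x, (P.ActOpt lam x ↔ lam ≤ ν x) ∧ (P.PassOpt lam x ↔ ν x ≤ lam)

/-- The `z`-policy is `P_lam`-optimal. -/
def ZPolicyOpt (z : EReal) (lam : ℝ) : Prop :=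
  ∀ x, P.F x z - lam * P.G x z = P.V lam x

/-- The `z⁻`-policy is `P_lam`-optimal. -/
def ZmPolicyOpt (z : EReal) (lam : ℝ) : Prop :=
  ∀ x, P.Fm x z - lam * P.Gm x z = P.V lam x

/-- The project is strongly threshold-indexable with index `ν`. -/
def StronglyThresholdIndexable (ν : ℝ → ℝ) : Prop :=
  P.Indexable ν ∧
    ∀ lam : ℝ, ∃ z : EReal, P.ZPolicyOpt z lam ∧ P.ZmPolicyOpt z lam

/-- PCL-indexability condition (PCLI1). -/
def PCLI1 : Prop := ∀ (x : ℝ) (z : EReal), 0 < P.g x z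

/-- PCL-indexability condition (PCLI2). -/
def PCLI2 : Prop :=
  Monotone P.mStar ∧ Continuous P.mStar ∧ BddBelow (Set.range P.mStar)

/-- PCL-indexability condition (PCLI3). -/
def PCLI3 : Prop :=
  ∀ x : ℝ, ∀ ν : Measure ℝ, IsLSMeasureOfAnti (fun z : ℝ => P.G x z) ν →
    ∀ z₁ z₂ : ℝ, z₁ < z₂ →
      P.F x z₂ - P.F x z₁ = -∫ z in Set.Ioc z₁ z₂, P.mStar z ∂ν

/-- The project is PCL-indexable. -/
def PCLIndexable : Prop := P.PCLI1 ∧ P.PCLI2 ∧ P.PCLI3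

/-- Reward metric with initial distribution `p`. -/
def Fp (p : Measure ℝ) (z : EReal) : ℝ := ∫ x, P.F x z ∂p

/-- Resource metric with initial distribution `p`. -/
def Gp (p : Measure ℝ) (z : EReal) : ℝ := ∫ x, P.G x z ∂p

/-- `z⁻`-policy reward metric with initial distribution `p`. -/
def Fmp (p : Measure ℝ) (z : EReal) : ℝ := ∫ x, P.Fm x z ∂p

/-- `z⁻`-policy resource metric with initial distribution `p`. -/
def Gmp (p : Measure ℝ) (z : EReal) : ℝ := ∫ x, P.Gm x z ∂p

/-- An admissible initial distribution: a probability measure with `∫ w dp < ∞`. -/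
def IsInitDist (p : Measure ℝ) : Prop :=
  IsProbabilityMeasure p ∧ Integrable P.w p

/-- The transition kernel of the `z`-policy (active iff `x > z`). -/
def thrKer (z : EReal) : Kernel ℝ ℝ :=
  haveI : DecidablePred (· ∈ {x : ℝ | z < (x : EReal)}) := Classical.decPred _
  Kernel.piecewise
    (show MeasurableSet {x : ℝ | z < (x : EReal)} from
      measurable_coe_real_ereal measurableSet_Ioi)
    (P.κ true) (P.κ false)

/-- The transition kernel of the `z⁻`-policy (active iff `x ≥ z`). -/
def thrKerM (z : EReal) : Kernel ℝ ℝ :=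
  haveI : DecidablePred (· ∈ {x : ℝ | z ≤ (x : EReal)}) := Classical.decPred _
  Kernel.piecewise
    (show MeasurableSet {x : ℝ | z ≤ (x : EReal)} from
      measurable_coe_real_ereal measurableSet_Ici)
    (P.κ true) (P.κ false)

/-- The (discounted) state occupation measure `μ_p^z` of the `z`-policy. -/
def occ (z : EReal) (p : Measure ℝ) : Measure ℝ :=
  Measure.sum fun t : ℕ => ENNReal.ofReal (P.β ^ t) • kerIter (P.thrKer z) t p

/-- The (discounted) state occupation measure `μ_p^{z⁻}` of the `z⁻`-policy. -/
def occM (z : EReal) (p : Measure ℝ) : Measure ℝ :=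
  Measure.sum fun t : ℕ => ENNReal.ofReal (P.β ^ t) • kerIter (P.thrKerM z) t p

end Bandit

/-- Finite-horizon reward metric `F_k(x,z)` (value iteration). -/
def Bandit.Fk (P : Bandit) : ℕ → ℝ → EReal → ℝ
  | 0, x, z => P.r x (decide (z < (x : EReal)))
  | (k + 1), x, z =>
      P.r x (decide (z < (x : EReal))) +
        P.β * ∫ y, Bandit.Fk P k y z ∂(P.κ (decide (z < (x : EReal))) x)

/-- Finite-horizon resource metric `G_k(x,z)` (value iteration). -/
def Bandit.Gk (P : Bandit) : ℕ → ℝ → EReal → ℝ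
  | 0, x, z => P.c x (decide (z < (x : EReal)))
  | (k + 1), x, z =>
      P.c x (decide (z < (x : EReal))) +
        P.β * ∫ y, Bandit.Gk P k y z ∂(P.κ (decide (z < (x : EReal))) x)

/-- Finite-horizon marginal reward metric `f_k(x,z)`. -/
def Bandit.fk (P : Bandit) : ℕ → ℝ → EReal → ℝ
  | 0, x, _ => P.r x true - P.r x false
  | (k + 1), x, z =>
      (P.r x true - P.r x false) +
        P.β * ((∫ y, P.Fk k y z ∂(P.κ true x)) - ∫ y, P.Fk k y z ∂(P.κ false x))

/-- Finite-horizon marginal resource metric `g_k(x,z)`. -/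
def Bandit.gk (P : Bandit) : ℕ → ℝ → EReal → ℝ
  | 0, x, _ => P.c x true - P.c x false
  | (k + 1), x, z =>
      (P.c x true - P.c x false) +
        P.β * ((∫ y, P.Gk k y z ∂(P.κ true x)) - ∫ y, P.Gk k y z ∂(P.κ false x))

namespace Bandit

variable (P : Bandit)

/-- Finite-horizon MP metric `m_k(x,z)`. -/
def mk' (k : ℕ) (x : ℝ) (z : EReal) : ℝ := P.fk k x z / P.gk k x z

/-- Finite-horizon MP index `m*_k(x)`. -/
def mkStar (k : ℕ) (x : ℝ) : ℝ := P.mk' k x (x : EReal)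

/-- `g̲(x,z) = inf_k g_k(x,z)`. -/
def gbar (x : ℝ) (z : EReal) : ℝ := ⨅ k : ℕ, P.gk k x z

end Bandit

/-!
Comparing the `x`- and `z`-policies state by state, `G(·,x) - G(·,z)` solves the Bellman
equation of the `z`-policy with reward `± g(·,x)` on the states between `x` and `z`, so
`G(p,x) - G(p,z) = ∫_x^z g(·,x) dμ_p^z`. As `g` is `w`-bounded uniformly in its threshold, this
tends to `0` as `x → z` unless `μ_p^z` has an atom at `z`. Conversely, the comparison with the
`z⁻`-policy gives `G(p,x) → G(p,z⁻)` as `x ↑ z` and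
`G(p,z) - G(p,z⁻) = -g(z,z) μ_p^{z⁻}{z}`. The two chains coincide until their first visit to
`z`, so `μ_p^z` and `μ_p^{z⁻}` charge `{z}` together, and `g(z,z) > 0` by (PCLI1).
-/

open ENNReal

section Occupation

variable {β : ℝ} {κ : Kernel ℝ ℝ} {p : Measure ℝ} {t : ℕ}

def discountedLaw (β : ℝ) (κ : Kernel ℝ ℝ) (t : ℕ) (p : Measure ℝ) : Measure ℝ :=
  ENNReal.ofReal (β ^ t) • kerIter κ t p

-- `P.occ z p` and `P.occM z p` are, by definition, this measure for `P.thrKer z`, `P.thrKerM z`.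
def discountedOccupation (β : ℝ) (κ : Kernel ℝ ℝ) (p : Measure ℝ) : Measure ℝ :=
  Measure.sum fun t => discountedLaw β κ t p

@[simp]
lemma discountedLaw_zero : discountedLaw β κ 0 p = p := by
  simp [discountedLaw, kerIter]

lemma discountedLaw_succ (hβ : 0 ≤ β) :
    discountedLaw β κ (t + 1) p = ENNReal.ofReal β • (discountedLaw β κ t p).bind κ := by
  rw [discountedLaw, discountedLaw, Measure.bind_smul, smul_smul, pow_succ,
    ENNReal.ofReal_mul (pow_nonneg hβ t), mul_comm]
  rfl

instance isFiniteMeasure_discountedLaw [IsMarkovKernel κ] [IsProbabilityMeasure p] :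
    IsFiniteMeasure (discountedLaw β κ t p) := by
  have : IsProbabilityMeasure (kerIter κ t p) := by
    induction t with
    | zero => assumption
    | succ t ih => exact inferInstanceAs (IsProbabilityMeasure (κ ∘ₘ kerIter κ t p))
  exact Measure.smul_finite _ ofReal_ne_top

lemma integral_discountedLaw_succ [IsMarkovKernel κ] [IsProbabilityMeasure p] (hβ : 0 ≤ β)
    {f : ℝ → ℝ} (hf : Integrable f (discountedLaw β κ (t + 1) p)) :
    ∫ y, f y ∂discountedLaw β κ (t + 1) p =
      ∫ x, β * ∫ y, f y ∂κ x ∂discountedLaw β κ t p := by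
  rcases hβ.eq_or_lt with rfl | hβ
  · simp [discountedLaw_succ le_rfl]
  rw [discountedLaw_succ hβ.le] at hf ⊢
  have hf' := (integrable_smul_measure (ENNReal.ofReal_pos.2 hβ).ne' ofReal_ne_top).1 hf
  rw [Measure.comp_eq_comp_const_apply] at hf'
  rw [integral_smul_measure, integral_const_mul, ENNReal.toReal_ofReal hβ.le, smul_eq_mul,
    Measure.comp_eq_comp_const_apply, Kernel.integral_comp hf']
  rfl

variable {κ₁ κ₂ : Kernel ℝ ℝ} {s : Set ℝ}

-- Before the first visit to `s` the two chains cannot be told apart.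
lemma discountedLaw_eq_of_eqOn_compl (hβ : 0 ≤ β) (h : ∀ x ∉ s, κ₁ x = κ₂ x) (t : ℕ)
    (ht : ∀ t' < t, discountedLaw β κ₁ t' p s = 0) :
    discountedLaw β κ₁ t p = discountedLaw β κ₂ t p := by
  induction t with
  | zero => simp
  | succ t ih =>
    have hae : ∀ᵐ x ∂discountedLaw β κ₁ t p, κ₁ x = κ₂ x :=
      (measure_eq_zero_iff_ae_notMem.1 (ht t t.lt_succ_self)).mono h
    rw [discountedLaw_succ hβ, discountedLaw_succ hβ, Measure.bind_congr_right hae,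
      ih fun t' h' => ht t' (h'.trans t.lt_succ_self)]

lemma discountedOccupation_pos_of_eqOn_compl (hβ : 0 ≤ β) (hs : MeasurableSet s)
    (h : ∀ x ∉ s, κ₁ x = κ₂ x) (hpos : 0 < discountedOccupation β κ₁ p s) :
    0 < discountedOccupation β κ₂ p s := by
  rw [discountedOccupation, Measure.sum_apply _ hs] at hpos ⊢
  have hex : ∃ t, discountedLaw β κ₁ t p s ≠ 0 := by
    by_contra! h0
    simp [h0] at hpos
  refine (pos_iff_ne_zero.2 ?_).trans_le (ENNReal.le_tsum (Nat.find hex))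
  rw [← discountedLaw_eq_of_eqOn_compl hβ h _ fun t' ht' => not_not.1 (Nat.find_min hex ht')]
  exact Nat.find_spec hex

end Occupation

namespace Bandit

variable (P : Bandit)

lemma w_pos (x : ℝ) : 0 < P.w x := zero_lt_one.trans_le (P.hw_one x)

-- The drift condition of Assumption 1, in `lintegral` form so that it needs no integrability.
def IsDrift (κ : Kernel ℝ ℝ) : Prop :=
  ∀ x, ENNReal.ofReal P.β * ∫⁻ y, ENNReal.ofReal (P.w y) ∂κ x ≤
    ENNReal.ofReal P.γ * ENNReal.ofReal (P.w x)

def WBounded (u : ℝ → ℝ) : Prop := ∃ C, ∀ x, |u x| ≤ C * P.w x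

variable {P}

lemma integrable_w_iff {μ : Measure ℝ} :
    Integrable P.w μ ↔ ∫⁻ x, ENNReal.ofReal (P.w x) ∂μ < ∞ := by
  rw [Integrable, hasFiniteIntegral_iff_ofReal (ae_of_all _ fun x => (P.w_pos x).le),
    and_iff_right P.hw_meas.aestronglyMeasurable]

lemma isFiniteMeasure_of_integrable_w {μ : Measure ℝ} (hμ : Integrable P.w μ) :
    IsFiniteMeasure μ := by
  refine ⟨?_⟩
  simpa using (lintegral_mono fun x => ENNReal.one_le_ofReal.2 (P.hw_one x)).trans_lt
    (integrable_w_iff.1 hμ)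

lemma WBounded.integrable {u : ℝ → ℝ} (hu : P.WBounded u) (hm : Measurable u)
    {μ : Measure ℝ} (hw : Integrable P.w μ) : Integrable u μ := by
  obtain ⟨C, hC⟩ := hu
  exact (hw.const_mul C).mono' hm.aestronglyMeasurable (ae_of_all _ hC)

lemma WBounded.sub {u v : ℝ → ℝ} (hu : P.WBounded u) (hv : P.WBounded v) :
    P.WBounded (u - v) := by
  obtain ⟨C, hC⟩ := hu
  obtain ⟨D, hD⟩ := hv
  exact ⟨C + D, fun x => (abs_sub _ _).trans (by linarith [hC x, hD x])⟩

lemma WBounded.indicator {u : ℝ → ℝ} (hu : P.WBounded u) (s : Set ℝ) :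
    P.WBounded (s.indicator u) := by
  obtain ⟨C, hC⟩ := hu
  exact ⟨C, fun x => (norm_indicator_le_norm_self u x).trans (hC x)⟩

section Occupation

variable {κ : Kernel ℝ ℝ} {p : Measure ℝ}

lemma lintegral_w_discountedLaw_le (hκ : P.IsDrift κ) (t : ℕ) :
    ∫⁻ x, ENNReal.ofReal (P.w x) ∂discountedLaw P.β κ t p ≤
      ENNReal.ofReal P.γ ^ t * ∫⁻ x, ENNReal.ofReal (P.w x) ∂p := by
  induction t with
  | zero => simp
  | succ t ih =>
    rw [discountedLaw_succ P.hβ0, lintegral_smul_measure, smul_eq_mul,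
      Measure.lintegral_bind κ.aemeasurable P.hw_meas.ennreal_ofReal.aemeasurable,
      ← lintegral_const_mul' _ _ ofReal_ne_top, pow_succ', mul_assoc]
    calc _ ≤ ∫⁻ x, ENNReal.ofReal P.γ * ENNReal.ofReal (P.w x) ∂discountedLaw P.β κ t p :=
          lintegral_mono hκ
      _ = _ := lintegral_const_mul' _ _ ofReal_ne_top
      _ ≤ _ := by gcongr

lemma integrable_w_discountedLaw (hκ : P.IsDrift κ) (hp : Integrable P.w p) (t : ℕ) :
    Integrable P.w (discountedLaw P.β κ t p) :=
  integrable_w_iff.2 <| (lintegral_w_discountedLaw_le hκ t).trans_lt <|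
    mul_lt_top (pow_lt_top ofReal_lt_top) (integrable_w_iff.1 hp)

lemma integrable_w_discountedOccupation (hκ : P.IsDrift κ) (hp : Integrable P.w p) :
    Integrable P.w (discountedOccupation P.β κ p) := by
  have hγ : ENNReal.ofReal P.γ < 1 := ENNReal.ofReal_lt_one.2 P.hγ1
  refine integrable_w_iff.2 ?_
  calc ∫⁻ x, ENNReal.ofReal (P.w x) ∂discountedOccupation P.β κ p
      = ∑' t, ∫⁻ x, ENNReal.ofReal (P.w x) ∂discountedLaw P.β κ t p :=
        lintegral_sum_measure _ _
    _ ≤ ∑' t, ENNReal.ofReal P.γ ^ t * ∫⁻ x, ENNReal.ofReal (P.w x) ∂p :=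
        ENNReal.tsum_le_tsum (lintegral_w_discountedLaw_le hκ)
    _ = (1 - ENNReal.ofReal P.γ)⁻¹ * ∫⁻ x, ENNReal.ofReal (P.w x) ∂p := by
        rw [ENNReal.tsum_mul_right, ENNReal.tsum_geometric]
    _ < ∞ := mul_lt_top (by simpa using hγ) (integrable_w_iff.1 hp)

-- Telescoping: `∫ D dp = ∑_{t<k} ∫ u dν_t + ∫ D dν_k` for `ν_t = discountedLaw β κ t p`, and
-- `∫ D dν_k → 0` because `∑ ∫ w dν_t < ∞`.
theorem integral_eq_integral_discountedOccupation [IsMarkovKernel κ] [IsProbabilityMeasure p]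
    (hκ : P.IsDrift κ) (hp : Integrable P.w p)
    {D u : ℝ → ℝ} (hDm : Measurable D) (hum : Measurable u) (hD : P.WBounded D)
    (hu : P.WBounded u) (hrec : ∀ x, D x = u x + P.β * ∫ y, D y ∂κ x) :
    ∫ x, D x ∂p = ∫ x, u x ∂discountedOccupation P.β κ p := by
  set ν := fun t => discountedLaw P.β κ t p
  have hwν := integrable_w_discountedLaw hκ hp
  have hstep : ∀ t, ∫ x, D x ∂ν t = ∫ x, u x ∂ν t + ∫ x, D x ∂ν (t + 1) := by
    intro t
    rw [integral_discountedLaw_succ P.hβ0 (hD.integrable hDm (hwν _))]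
    rw [integral_congr_ae (ae_of_all _ fun x => (eq_sub_of_add_eq' (hrec x).symm)),
      integral_sub (hD.integrable hDm (hwν t)) (hu.integrable hum (hwν t))]
    ring
  have hpartial :
      ∀ k, ∑ t ∈ Finset.range k, ∫ x, u x ∂ν t = ∫ x, D x ∂p - ∫ x, D x ∂ν k := by
    intro k
    induction k with
    | zero => simp [ν]
    | succ k ih => rw [Finset.sum_range_succ, ih, hstep k]; ring
  have htail : Tendsto (fun k => ∫ x, D x ∂ν k) atTop (𝓝 0) := by
    obtain ⟨C, hC⟩ := hD
    have hw0 : Tendsto (fun k => ∫ x, P.w x ∂ν k) atTop (𝓝 0) := (hasSum_integral_measure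
      (integrable_w_discountedOccupation hκ hp)).summable.tendsto_atTop_zero
    refine squeeze_zero_norm (fun k => ?_) (by simpa using hw0.const_mul C)
    rw [← integral_const_mul]
    exact norm_integral_le_of_norm_le ((hwν k).const_mul C) (ae_of_all _ hC)
  have hsum := (hasSum_integral_measure
    (hu.integrable hum (integrable_w_discountedOccupation hκ hp))).tendsto_sum_nat
  have hlim :
      Tendsto (fun k => ∑ t ∈ Finset.range k, ∫ x, u x ∂ν t) atTop (𝓝 (∫ x, D x ∂p)) := by
    simp_rw [hpartial]
    simpa using tendsto_const_nhds.sub htail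
  exact tendsto_nhds_unique hlim hsum

end Occupation

variable (P)

lemma thrKer_apply (z : EReal) (x : ℝ) : P.thrKer z x = P.κ (decide (z < (x : EReal))) x := by
  rw [thrKer, @Kernel.piecewise_apply _ _ _ _ _ _ _ _ (Classical.decPred _)]
  by_cases h : z < (x : EReal) <;> simp [h]

lemma thrKerM_apply (z : EReal) (x : ℝ) :
    P.thrKerM z x = P.κ (decide (z ≤ (x : EReal))) x := by
  rw [thrKerM, @Kernel.piecewise_apply _ _ _ _ _ _ _ _ (Classical.decPred _)]
  by_cases h : z ≤ (x : EReal) <;> simp [h]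

instance (a : Bool) : IsMarkovKernel (P.κ a) := P.hκ a

instance (z : EReal) : IsMarkovKernel (P.thrKer z) := by
  unfold thrKer; infer_instance

instance (z : EReal) : IsMarkovKernel (P.thrKerM z) := by
  unfold thrKerM; infer_instance

lemma lintegral_w_drift (a : Bool) (x : ℝ) :
    ENNReal.ofReal P.β * ∫⁻ y, ENNReal.ofReal (P.w y) ∂P.κ a x ≤
      ENNReal.ofReal P.γ * ENNReal.ofReal (P.w x) := by
  rw [← ofReal_integral_eq_lintegral_ofReal (P.hw_int a x) (ae_of_all _ fun y => (P.w_pos y).le),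
    ← ENNReal.ofReal_mul P.hβ0, ← ENNReal.ofReal_mul (P.hβγ.trans' P.hβ0)]
  exact ENNReal.ofReal_le_ofReal (P.hw_drift a x)

lemma isDrift_thrKer (z : EReal) : P.IsDrift (P.thrKer z) := fun x => by
  rw [thrKer_apply]; exact P.lintegral_w_drift _ x

lemma isDrift_thrKerM (z : EReal) : P.IsDrift (P.thrKerM z) := fun x => by
  rw [thrKerM_apply]; exact P.lintegral_w_drift _ x

lemma mul_integral_abs_le {u : ℝ → ℝ} {K : ℝ} (hK : 0 ≤ K) (hu : ∀ y, |u y| ≤ K * P.w y)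
    (a : Bool) (x : ℝ) : P.β * ∫ y, |u y| ∂P.κ a x ≤ K * (P.γ * P.w x) := by
  calc P.β * ∫ y, |u y| ∂P.κ a x ≤ P.β * ∫ y, K * P.w y ∂P.κ a x := by
        gcongr P.β * ?_
        · exact P.hβ0
        exact integral_mono_of_nonneg (ae_of_all _ fun y => abs_nonneg _)
          ((P.hw_int a x).const_mul K) (ae_of_all _ hu)
    _ = K * (P.β * ∫ y, P.w y ∂P.κ a x) := by rw [integral_const_mul]; ring
    _ ≤ K * (P.γ * P.w x) := mul_le_mul_of_nonneg_left (P.hw_drift a x) hK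

-- With `s = sup |u| / w`, the hypothesis gives `s ≤ M + γ s`.
lemma abs_le_of_abs_le_add_integral {u : ℝ → ℝ} (a : ℝ → Bool) (hu : P.WBounded u)
    (hrec : ∀ x, |u x| ≤ P.M * P.w x + P.β * ∫ y, |u y| ∂P.κ (a x) x) (x : ℝ) :
    |u x| ≤ P.M / (1 - P.γ) * P.w x := by
  obtain ⟨C, hC⟩ := hu
  have hbdd : BddAbove (Set.range fun x => |u x| / P.w x) :=
    ⟨C, by rintro _ ⟨x, rfl⟩; exact (div_le_iff₀ (P.w_pos x)).2 (hC x)⟩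
  set s := ⨆ x, |u x| / P.w x
  have hs : ∀ x, |u x| ≤ s * P.w x := fun x => (div_le_iff₀ (P.w_pos x)).1 (le_ciSup hbdd x)
  have hs0 : 0 ≤ s := (div_nonneg (abs_nonneg _) (P.w_pos 0).le).trans (le_ciSup hbdd 0)
  have hsM : s ≤ P.M + P.γ * s := ciSup_le fun x => by
    rw [div_le_iff₀ (P.w_pos x)]
    linarith [hrec x, P.mul_integral_abs_le hs0 hs (a x) x]
  have hγ : 0 < 1 - P.γ := by linarith [P.hγ1]
  calc |u x| ≤ s * P.w x := hs x
    _ ≤ P.M / (1 - P.γ) * P.w x := by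
        gcongr
        · exact (P.w_pos x).le
        rw [le_div_iff₀ hγ]; linarith

lemma c_nonneg (x : ℝ) (a : Bool) : 0 ≤ P.c x a := by
  cases a
  · exact P.hc0 x
  · exact (P.hc0 x).trans (P.hc01 x).le

lemma abs_G_le (x : ℝ) (z : EReal) : |P.G x z| ≤ P.M / (1 - P.γ) * P.w x := by
  refine P.abs_le_of_abs_le_add_integral (fun x => decide (z < (x : EReal))) (P.hG_bdd z)
    (fun x => ?_) x
  rw [P.hG_eq x z]
  refine (abs_add_le _ _).trans (add_le_add ?_ ?_)
  · rw [abs_of_nonneg (P.c_nonneg _ _)]; exact P.hc_bd _ _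
  · rw [abs_mul, abs_of_nonneg P.hβ0]
    gcongr
    · exact P.hβ0
    exact abs_integral_le_integral_abs

lemma exists_abs_g_le : ∃ C, ∀ x ζ, |P.g x ζ| ≤ C * P.w x := by
  set K := P.M / (1 - P.γ)
  have hK : 0 ≤ K := div_nonneg P.hM.le (by linarith [P.hγ1])
  refine ⟨P.M + 2 * (K * P.γ), fun x ζ => ?_⟩
  have hint : ∀ a, P.β * |∫ y, P.G y ζ ∂P.κ a x| ≤ K * (P.γ * P.w x) := fun a =>
    (mul_le_mul_of_nonneg_left abs_integral_le_integral_abs P.hβ0).trans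
      (P.mul_integral_abs_le hK (fun y => P.abs_G_le y ζ) a x)
  have hc : |P.c x true - P.c x false| ≤ P.M * P.w x := by
    rw [abs_of_nonneg (sub_nonneg.2 (P.hc01 x).le)]
    linarith [P.hc_bd x true, P.c_nonneg x false]
  have hβ : |P.β * ((∫ y, P.G y ζ ∂P.κ true x) - ∫ y, P.G y ζ ∂P.κ false x)| ≤
      2 * (K * (P.γ * P.w x)) := by
    rw [abs_mul, abs_of_nonneg P.hβ0]
    linarith [mul_le_mul_of_nonneg_left (abs_sub (∫ y, P.G y ζ ∂P.κ true x)
      (∫ y, P.G y ζ ∂P.κ false x)) P.hβ0, hint true, hint false]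
  calc |P.g x ζ| ≤ P.M * P.w x + 2 * (K * (P.γ * P.w x)) :=
        (abs_add_le _ _).trans (add_le_add hc hβ)
    _ = (P.M + 2 * (K * P.γ)) * P.w x := by ring

lemma measurable_g (ζ : EReal) : Measurable fun x => P.g x ζ := by
  have h : ∀ a, Measurable fun x => ∫ y, P.G y ζ ∂P.κ a x := fun a =>
    ((P.hG_meas ζ).stronglyMeasurable.integral_kernel (κ := P.κ a)).measurable
  exact (((P.hc_cont true).measurable.sub (P.hc_cont false).measurable).add
    (measurable_const.mul ((h true).sub (h false))))

lemma wBounded_g (ζ : EReal) : P.WBounded fun x => P.g x ζ := by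
  obtain ⟨C, hC⟩ := P.exists_abs_g_le
  exact ⟨C, fun x => hC x ζ⟩

lemma integrable_G_κ (ζ : EReal) (a : Bool) (x : ℝ) :
    Integrable (fun y => P.G y ζ) (P.κ a x) :=
  WBounded.integrable (P.hG_bdd ζ) (P.hG_meas ζ) (P.hw_int a x)

lemma integrable_Gm_κ (ζ : EReal) (a : Bool) (x : ℝ) :
    Integrable (fun y => P.Gm y ζ) (P.κ a x) :=
  WBounded.integrable (P.hGm_bdd ζ) (P.hGm_meas ζ) (P.hw_int a x)

-- `g(y,ζ)` is the marginal cost of switching the action at `y`, so it enters exactly where the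
-- `ζ`-policy and the action `b` disagree.
lemma G_sub_eq_of_fixedPoint {D : ℝ → ℝ} (y : ℝ) (ζ : EReal) (b : Bool)
    (hD : D y = P.c y b + P.β * ∫ v, D v ∂P.κ b y) (hDi : Integrable D (P.κ b y)) :
    P.G y ζ - D y = (((decide (ζ < (y : EReal))).toNat : ℝ) - b.toNat) * P.g y ζ +
      P.β * ∫ v, (P.G v ζ - D v) ∂P.κ b y := by
  rw [P.hG_eq y ζ, hD, integral_sub (P.integrable_G_κ ζ b y) hDi]
  generalize decide (ζ < (y : EReal)) = a
  cases a <;> cases b <;> simp [g] <;> ring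

lemma G_sub_G_eq (x z y : ℝ) :
    P.G y x - P.G y z = ((Ioc x z).indicator (fun v => P.g v x) y -
      (Ioc z x).indicator (fun v => P.g v x) y) +
        P.β * ∫ v, (P.G v x - P.G v z) ∂P.thrKer z y := by
  rw [thrKer_apply, P.G_sub_eq_of_fixedPoint y x _ (P.hG_eq y z) (P.integrable_G_κ _ _ _)]
  congr 1
  by_cases hxy : x < y <;> by_cases hzy : z < y <;>
    simp only [hxy, hzy, Set.indicator, Set.mem_Ioc, EReal.coe_lt_coe_iff, decide_true,
      decide_false, Bool.toNat_true, Bool.toNat_false] <;>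
    split_ifs <;> simp_all <;> linarith

lemma G_sub_Gm_eq (x z y : ℝ) :
    P.G y x - P.Gm y z = ((Ioo x z).indicator (fun v => P.g v x) y -
      (Icc z x).indicator (fun v => P.g v x) y) +
        P.β * ∫ v, (P.G v x - P.Gm v z) ∂P.thrKerM z y := by
  rw [thrKerM_apply, P.G_sub_eq_of_fixedPoint y x _ (P.hGm_eq y z) (P.integrable_Gm_κ _ _ _)]
  congr 1
  by_cases hxy : x < y <;> by_cases hzy : z ≤ y <;>
    simp only [hxy, hzy, Set.indicator, Set.mem_Ioo, Set.mem_Icc, EReal.coe_lt_coe_iff,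
      EReal.coe_le_coe_iff, decide_true, decide_false, Bool.toNat_true, Bool.toNat_false] <;>
    split_ifs <;> simp_all <;> linarith

variable {P} {p : Measure ℝ}

lemma integral_sub_eq_setIntegral_sub {κ : Kernel ℝ ℝ} [IsMarkovKernel κ] (hκ : P.IsDrift κ)
    (hp : P.IsInitDist p) {D₁ D₂ : ℝ → ℝ} (hD₁m : Measurable D₁) (hD₂m : Measurable D₂)
    (hD₁ : P.WBounded D₁) (hD₂ : P.WBounded D₂) (ζ : EReal) {s t : Set ℝ}
    (hs : MeasurableSet s) (ht : MeasurableSet t)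
    (hrec : ∀ y, D₁ y - D₂ y = (s.indicator (fun v => P.g v ζ) y -
      t.indicator (fun v => P.g v ζ) y) + P.β * ∫ v, (D₁ v - D₂ v) ∂κ y) :
    ∫ y, D₁ y ∂p - ∫ y, D₂ y ∂p =
      ∫ y in s, P.g y ζ ∂discountedOccupation P.β κ p -
        ∫ y in t, P.g y ζ ∂discountedOccupation P.β κ p := by
  have := hp.1
  have hμ := integrable_w_discountedOccupation hκ hp.2
  have hg := (P.wBounded_g ζ).integrable (P.measurable_g ζ) hμ
  rw [← integral_sub (hD₁.integrable hD₁m hp.2) (hD₂.integrable hD₂m hp.2),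
    ← integral_indicator hs, ← integral_indicator ht,
    ← integral_sub (hg.indicator hs) (hg.indicator ht)]
  exact integral_eq_integral_discountedOccupation hκ hp.2 (hD₁m.sub hD₂m)
    (((P.measurable_g ζ).indicator hs).sub ((P.measurable_g ζ).indicator ht)) (hD₁.sub hD₂)
    (((P.wBounded_g ζ).indicator s).sub ((P.wBounded_g ζ).indicator t)) hrec

lemma Gp_sub_Gp_eq (hp : P.IsInitDist p) (x z : ℝ) :
    P.Gp p x - P.Gp p z = ∫ y in x..z, P.g y x ∂P.occ z p :=
  integral_sub_eq_setIntegral_sub (P.isDrift_thrKer z) hp (P.hG_meas _) (P.hG_meas _)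
    (P.hG_bdd _) (P.hG_bdd _) _ measurableSet_Ioc measurableSet_Ioc (P.G_sub_G_eq x z)

lemma Gp_sub_Gmp_eq (hp : P.IsInitDist p) (x z : ℝ) :
    P.Gp p x - P.Gmp p z =
      ∫ y in Ioo x z, P.g y x ∂P.occM z p - ∫ y in Icc z x, P.g y x ∂P.occM z p :=
  integral_sub_eq_setIntegral_sub (P.isDrift_thrKerM z) hp (P.hG_meas _) (P.hGm_meas _)
    (P.hG_bdd _) (P.hGm_bdd _) _ measurableSet_Ioo measurableSet_Icc (P.G_sub_Gm_eq x z)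

end Bandit

lemma tendsto_setIntegral_zero_of_ae_eventually_notMem {α ι E : Type*} [MeasurableSpace α]
    [NormedAddCommGroup E] [NormedSpace ℝ E] {μ : Measure α} {l : Filter ι}
    [l.IsCountablyGenerated] {f : α → E} (hf : Integrable f μ) {s : ι → Set α}
    (hs : ∀ i, MeasurableSet (s i)) (h : ∀ᵐ y ∂μ, ∀ᶠ i in l, y ∉ s i) :
    Tendsto (fun i => ∫ y in s i, f y ∂μ) l (𝓝 0) := by
  simp_rw [← integral_indicator (hs _)]
  simpa using tendsto_integral_filter_of_dominated_convergence (fun y => ‖f y‖)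
    (Eventually.of_forall fun i => (hf.indicator (hs i)).aestronglyMeasurable)
    (Eventually.of_forall fun i => ae_of_all _ fun y => norm_indicator_le_norm_self f y) hf.norm
    (h.mono fun y hy => tendsto_const_nhds.congr' <| hy.mono fun i hi =>
      (indicator_of_notMem hi f).symm)

lemma eventually_notMem_uIoc {y z : ℝ} (h : y ≠ z) : ∀ᶠ x in 𝓝 z, y ∉ uIoc x z := by
  rcases h.lt_or_gt with h | h
  · filter_upwards [lt_mem_nhds h] with x hx hy using (lt_min hx h).not_ge hy.1.le
  · filter_upwards [gt_mem_nhds h] with x hx hy using (max_lt hx h).not_ge hy.2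

lemma eventually_notMem_Ioo (y z : ℝ) : ∀ᶠ x in 𝓝[<] z, y ∉ Ioo x z := by
  rcases lt_or_ge y z with h | h
  · filter_upwards [Ioo_mem_nhdsLT h] with x hx hy using hx.1.not_gt hy.1
  · exact Eventually.of_forall fun x hy => h.not_gt hy.2

namespace Bandit

variable {P : Bandit} {p : Measure ℝ}

lemma exists_abs_setIntegral_g_le {μ : Measure ℝ} (hμ : Integrable P.w μ) :
    ∃ C, ∀ s ζ, |∫ y in s, P.g y ζ ∂μ| ≤ C * ∫ y in s, P.w y ∂μ := by
  obtain ⟨C, hC⟩ := P.exists_abs_g_le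
  refine ⟨C, fun s ζ => ?_⟩
  rw [← integral_const_mul]
  exact norm_integral_le_of_norm_le (f := fun y => P.g y ζ) (hμ.integrableOn.const_mul C)
    (ae_of_all _ fun y => hC y ζ)

lemma continuousAt_Gp (hp : P.IsInitDist p) {z : ℝ} (h : P.occ z p {z} = 0) :
    ContinuousAt (fun x : ℝ => P.Gp p x) z := by
  have hμ := integrable_w_discountedOccupation (P.isDrift_thrKer z) hp.2
  obtain ⟨C, hC⟩ := exists_abs_setIntegral_g_le hμ
  have hlim := tendsto_setIntegral_zero_of_ae_eventually_notMem hμ (fun x => measurableSet_uIoc)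
    ((measure_eq_zero_iff_ae_notMem.1 h).mono fun y hy => eventually_notMem_uIoc hy)
  rw [ContinuousAt, tendsto_iff_norm_sub_tendsto_zero]
  refine squeeze_zero (fun x => norm_nonneg _) (fun x => ?_) (by simpa using hlim.const_mul C)
  rw [Gp_sub_Gp_eq hp, intervalIntegral.norm_integral_eq_norm_integral_uIoc]
  exact hC _ _

lemma tendsto_Gp_nhdsLT (hp : P.IsInitDist p) (z : ℝ) :
    Tendsto (fun x : ℝ => P.Gp p x) (𝓝[<] z) (𝓝 (P.Gmp p z)) := by
  have hμ := integrable_w_discountedOccupation (P.isDrift_thrKerM z) hp.2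
  obtain ⟨C, hC⟩ := exists_abs_setIntegral_g_le hμ
  have hlim := tendsto_setIntegral_zero_of_ae_eventually_notMem hμ (fun x => measurableSet_Ioo)
    (ae_of_all _ fun y => eventually_notMem_Ioo y z)
  rw [tendsto_iff_norm_sub_tendsto_zero]
  refine squeeze_zero' (Eventually.of_forall fun x => norm_nonneg _) ?_
    (by simpa using hlim.const_mul C)
  filter_upwards [self_mem_nhdsWithin] with x (hx : x < z)
  rw [Gp_sub_Gmp_eq hp, Icc_eq_empty hx.not_ge, Measure.restrict_empty, integral_zero_measure,
    sub_zero]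
  exact hC _ _

lemma Gp_sub_Gmp_self (hp : P.IsInitDist p) (z : ℝ) :
    P.Gp p z - P.Gmp p z = -((P.occM z p).real {z} * P.g z z) := by
  rw [Gp_sub_Gmp_eq hp, Ioo_self, Icc_self, Measure.restrict_empty, integral_zero_measure,
    integral_singleton, smul_eq_mul, zero_sub]

lemma measureReal_occM_singleton_pos (hp : P.IsInitDist p) {z : ℝ} (h : 0 < P.occ z p {z}) :
    0 < (P.occM z p).real {z} := by
  have hpos : 0 < P.occM z p {z} := by
    refine discountedOccupation_pos_of_eqOn_compl P.hβ0 (measurableSet_singleton _)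
      (fun x hx => ?_) h
    have hzx : (z : EReal) < x ↔ (z : EReal) ≤ x := by
      rw [EReal.coe_lt_coe_iff, EReal.coe_le_coe_iff]
      exact ⟨le_of_lt, fun h' => h'.lt_of_ne (Ne.symm hx)⟩
    simp only [thrKer_apply, thrKerM_apply, hzx]
  have := hp.1
  have : IsFiniteMeasure (P.occM z p) :=
    isFiniteMeasure_of_integrable_w (integrable_w_discountedOccupation (P.isDrift_thrKerM z) hp.2)
  exact ENNReal.toReal_pos hpos.ne' (measure_ne_top _ _)

end Bandit

/-- Under (PCLI1), `G(p,·)` is discontinuous at `z` iff the occupation measure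
`μ_p^z` of the `z`-policy charges `{z}`. -/
theorem resource_metric_discontinuous_iff (P : Bandit) (h1 : P.PCLI1)
    (p : Measure ℝ) (hp : P.IsInitDist p) (z : ℝ) :
    ¬ ContinuousAt (fun z' : ℝ => P.Gp p z') z ↔ 0 < P.occ z p {z} := by
  refine ⟨fun hdis => pos_iff_ne_zero.2 fun h => hdis (Bandit.continuousAt_Gp hp h),
    fun hpos hcont => ?_⟩
  have hleft : P.Gp p z = P.Gmp p z := tendsto_nhds_unique
    (hcont.tendsto.mono_left nhdsWithin_le_nhds) (Bandit.tendsto_Gp_nhdsLT hp z)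
  have hjump := Bandit.Gp_sub_Gmp_self hp z
  rw [hleft, sub_self, zero_eq_neg] at hjump
  exact (mul_pos (Bandit.measureReal_occM_singleton_pos hp hpos) (h1 z z)).ne' hjump
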